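/- Let k be a field of characteristic p > 0 and let f ∈ k[x,y] with f ∉ k[x^p, y^p] (f does not lie in the k-subalgebra generated by x^p and y^p). If f is univariate (i.e. f ∈ k[g] for some variable g of k[x,y]), then there exists a locally finite iterative higher k-derivation (lfihd) D on k[x,y] of Jacobian type determined by f. -/

import Mathlib

open MvPolynomial

/-- A higher `R`-derivation on `B`: a family of `R`-linear maps `D ℓ : B → B`
with `D 0 = id` and the Leibniz rule `D ℓ (a*b) = ∑_{i+j=ℓ} D i a * D j b`. -/
structure HigherDerivation (R B : Type*) [CommRing R] [CommRing B] [Algebra R B] where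
  D : ℕ → B →ₗ[R] B
  D_zero : D 0 = LinearMap.id
  leibniz : ∀ (ℓ : ℕ) (a b : B),
    D ℓ (a * b) = ∑ ij ∈ Finset.HasAntidiagonal.antidiagonal ℓ, D ij.1 a * D ij.2 b

namespace HigherDerivation

variable {R B : Type*} [CommRing R] [CommRing B] [Algebra R B]

/-- The kernel `B^D = ⋂_{ℓ ≥ 1} ker D_ℓ` of a higher derivation. -/
def kerSet (hd : HigherDerivation R B) : Set B :=
  {b | ∀ ℓ : ℕ, 1 ≤ ℓ → hd.D ℓ b = 0}

/-- `D` is locally finite. -/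
def LocallyFinite (hd : HigherDerivation R B) : Prop :=
  ∀ b : B, ∃ N : ℕ, ∀ ℓ : ℕ, N ≤ ℓ → hd.D ℓ b = 0

/-- `D` is iterative: `D_i ∘ D_j = binom(i+j, j) • D_{i+j}`. -/
def Iterative (hd : HigherDerivation R B) : Prop :=
  ∀ (i j : ℕ) (b : B), hd.D i (hd.D j b) = (i + j).choose j • hd.D (i + j) b

/-- `s` is a slice of `D`: the `t`-degree `N ≥ 1` of `φ_D(s)` is minimal among the
`t`-degrees of `φ_D(b)` for `b ∉ B^D`, and the leading `t`-coefficient `D N s` of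
`φ_D(s)` is a unit of `B` (in particular `s ∉ B^D`). -/
def IsSlice (hd : HigherDerivation R B) (s : B) : Prop :=
  ∃ N : ℕ, 1 ≤ N ∧ hd.D N s ≠ 0 ∧ (∀ ℓ : ℕ, N < ℓ → hd.D ℓ s = 0) ∧
    IsUnit (hd.D N s) ∧ ∀ b : B, b ∉ hd.kerSet → ∃ m : ℕ, N ≤ m ∧ hd.D m b ≠ 0

end HigherDerivation
/-- The Jacobian derivation `Δ_h` on `k[x,y]`:
`Δ_h(g) = (∂h/∂x)(∂g/∂y) − (∂h/∂y)(∂g/∂x)`. -/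
noncomputable def jacobianDeriv {k : Type*} [CommRing k]
    (h g : MvPolynomial (Fin 2) k) : MvPolynomial (Fin 2) k :=
  pderiv 0 h * pderiv 1 g - pderiv 1 h * pderiv 0 g

/-- `D` is of Jacobian type determined by `h` (in characteristic `p`): `h` is
non-constant, `h ∈ B^D`, `D_1 = Δ_h`, and `ℓ! • D_ℓ = Δ_h^[ℓ]` for `0 ≤ ℓ ≤ p-1`. -/
def IsJacobianType {k : Type*} [CommRing k] (p : ℕ)
    (hd : HigherDerivation k (MvPolynomial (Fin 2) k))
    (h : MvPolynomial (Fin 2) k) : Prop :=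
  (∀ c : k, h ≠ MvPolynomial.C c) ∧ h ∈ hd.kerSet ∧
    (∀ g, hd.D 1 g = jacobianDeriv h g) ∧
    ∀ ℓ : ℕ, ℓ < p → ∀ g, ℓ.factorial • hd.D ℓ g = (jacobianDeriv h)^[ℓ] g

/-- `f` is a variable of `k[x,y]`. -/
def IsVariable {k : Type*} [CommRing k] (f : MvPolynomial (Fin 2) k) : Prop :=
  ∃ g : MvPolynomial (Fin 2) k,
    AlgebraicIndependent k ![f, g] ∧ Algebra.adjoin k {f, g} = ⊤

universe u

/-! If `f = Q(g)` with `g` a variable and `k[g, h] = k[x, y]`, identify `k[x, y]` with `A[T]`,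
where `A = k[g]` and `T = h`. The Jacobian `Δ_g h` is a unit: `Δ` is a derivation in each
argument, so the ideal generated by `Δ_g h` contains every `Δ_a b`, in particular
`Δ_x y = 1`. Hence `Δ_f h = Q'(g) Δ_g h` is some `a ∈ A`, while `Δ_f g = 0`, so `Δ_f = a ∂_T`.
Its exponential `D_ℓ = aˡ ∂_T^{[ℓ]}` (Hasse derivatives in `T`) is a locally finite iterative
higher derivation killing `A ∋ f`, and iterativity gives `ℓ! D_ℓ = Δ_fˡ` for every `ℓ`. -/

namespace HigherDerivation

variable {R A B C : Type*} [CommRing R] [CommRing A] [CommRing B] [CommRing C]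
  [Algebra R A] [Algebra R B] [Algebra R C]

def toDerivation (hd : HigherDerivation R B) : Derivation R B B :=
  Derivation.mk' (hd.D 1) fun a b => by
    rw [hd.leibniz]
    simp [Finset.Nat.antidiagonal_succ, hd.D_zero, mul_comm]

@[simp]
lemma toDerivation_apply (hd : HigherDerivation R B) (b : B) : hd.toDerivation b = hd.D 1 b :=
  rfl

lemma Iterative.factorial_smul_D {hd : HigherDerivation R B} (hit : hd.Iterative) (ℓ : ℕ)
    (b : B) : ℓ.factorial • hd.D ℓ b = (hd.D 1)^[ℓ] b := by
  induction ℓ with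
  | zero => simp [hd.D_zero]
  | succ ℓ ih =>
    rw [Function.iterate_succ_apply', ← ih, map_nsmul, hit, add_comm 1 ℓ,
      Nat.choose_succ_self_right, smul_smul, Nat.factorial_succ, mul_comm]

def comapEquiv (hd : HigherDerivation R C) (Θ : B ≃ₐ[R] C) : HigherDerivation R B where
  D ℓ := Θ.symm.toLinearMap ∘ₗ hd.D ℓ ∘ₗ Θ.toLinearMap
  D_zero := by ext b; simp [hd.D_zero]
  leibniz ℓ a b := by simp [hd.leibniz]

@[simp]
lemma comapEquiv_D_apply (hd : HigherDerivation R C) (Θ : B ≃ₐ[R] C) (ℓ : ℕ) (b : B) :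
    (hd.comapEquiv Θ).D ℓ b = Θ.symm (hd.D ℓ (Θ b)) :=
  rfl

lemma mem_kerSet_comapEquiv {hd : HigherDerivation R C} {Θ : B ≃ₐ[R] C} {b : B} :
    b ∈ (hd.comapEquiv Θ).kerSet ↔ Θ b ∈ hd.kerSet := by
  simp [kerSet]

lemma LocallyFinite.comapEquiv {hd : HigherDerivation R C} (hlf : hd.LocallyFinite)
    (Θ : B ≃ₐ[R] C) : (hd.comapEquiv Θ).LocallyFinite := fun b => by
  obtain ⟨N, hN⟩ := hlf (Θ b)
  exact ⟨N, fun ℓ hℓ => by simp [hN ℓ hℓ]⟩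

lemma Iterative.comapEquiv {hd : HigherDerivation R C} (hit : hd.Iterative)
    (Θ : B ≃ₐ[R] C) : (hd.comapEquiv Θ).Iterative := fun i j b => by
  simp only [comapEquiv_D_apply, AlgEquiv.apply_symm_apply]
  rw [hit, map_nsmul]

open Polynomial in
noncomputable def scaledHasse (a : A) : HigherDerivation R A[X] where
  D ℓ := (LinearMap.mulLeft A (Polynomial.C a ^ ℓ) ∘ₗ hasseDeriv ℓ).restrictScalars R
  D_zero := by ext q : 1; simp
  leibniz ℓ f g := by
    simp only [LinearMap.restrictScalars_apply, LinearMap.coe_comp, Function.comp_apply,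
      LinearMap.mulLeft_apply, hasseDeriv_mul, Finset.mul_sum]
    refine Finset.sum_congr rfl fun ij hij => ?_
    rw [← Finset.HasAntidiagonal.mem_antidiagonal.mp hij, pow_add]
    ring

open Polynomial in
@[simp]
lemma scaledHasse_D_apply (a : A) (ℓ : ℕ) (q : A[X]) :
    (scaledHasse (R := R) a).D ℓ q = Polynomial.C a ^ ℓ * hasseDeriv ℓ q :=
  rfl

lemma scaledHasse_locallyFinite (a : A) : (scaledHasse (R := R) a).LocallyFinite := fun q =>
  ⟨q.natDegree + 1, fun ℓ hℓ => by
    rw [scaledHasse_D_apply, Polynomial.hasseDeriv_eq_zero_of_lt_natDegree _ _ (by omega),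
      mul_zero]⟩

open Polynomial in
lemma scaledHasse_iterative (a : A) : (scaledHasse (R := R) a).Iterative := fun i j q => by
  have hcomp := LinearMap.congr_fun (hasseDeriv_comp (R := A) i j) q
  have hpow : hasseDeriv i (Polynomial.C a ^ j * hasseDeriv j q) =
      Polynomial.C a ^ j * hasseDeriv i (hasseDeriv j q) := by
    rw [← map_pow, ← Polynomial.smul_eq_C_mul, map_smul, Polynomial.smul_eq_C_mul]
  simp only [LinearMap.coe_comp, Function.comp_apply, LinearMap.smul_apply] at hcomp
  rw [scaledHasse_D_apply, scaledHasse_D_apply, scaledHasse_D_apply, hpow, hcomp,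
    Nat.choose_symm_add, ← mul_assoc, ← pow_add, mul_smul_comm]

lemma C_mem_kerSet_scaledHasse (a c : A) :
    Polynomial.C c ∈ (scaledHasse (R := R) a).kerSet := fun ℓ hℓ => by
  rw [scaledHasse_D_apply, Polynomial.hasseDeriv_C _ _ hℓ, mul_zero]

end HigherDerivation

lemma Derivation.mem_of_adjoin_eq_top {R A : Type*} [CommRing R] [CommRing A] [Algebra R A]
    (d : Derivation R A A) {s : Set A} (hs : Algebra.adjoin R s = ⊤) {I : Ideal A}
    (hI : ∀ x ∈ s, d x ∈ I) (b : A) : d b ∈ I := by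
  have hzero : (Submodule.mkQ I).compDer d = 0 :=
    Derivation.ext_of_adjoin_eq_top s hs fun x hx => by
      simpa [Ideal.Quotient.eq_zero_iff_mem] using hI x hx
  simpa [Ideal.Quotient.eq_zero_iff_mem] using DFunLike.congr_fun hzero b

section Jacobian

variable {k : Type*} [CommRing k]

noncomputable def jacobianDerivation (h : MvPolynomial (Fin 2) k) :
    Derivation k (MvPolynomial (Fin 2) k) (MvPolynomial (Fin 2) k) :=
  pderiv 0 h • pderiv 1 - pderiv 1 h • pderiv 0

@[simp]
lemma jacobianDerivation_apply (h g : MvPolynomial (Fin 2) k) :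
    jacobianDerivation h g = jacobianDeriv h g := by
  simp [jacobianDerivation, jacobianDeriv]

lemma jacobianDeriv_comm (g h : MvPolynomial (Fin 2) k) :
    jacobianDeriv g h = -jacobianDeriv h g := by
  unfold jacobianDeriv
  ring

@[simp]
lemma jacobianDeriv_self (h : MvPolynomial (Fin 2) k) : jacobianDeriv h h = 0 := by
  unfold jacobianDeriv
  ring

lemma jacobianDeriv_X_zero_X_one : jacobianDeriv (X 0 : MvPolynomial (Fin 2) k) (X 1) = 1 := by
  simp [jacobianDeriv, pderiv_X]

lemma jacobianDeriv_aeval (g b : MvPolynomial (Fin 2) k) (Q : Polynomial k) :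
    jacobianDeriv (Polynomial.aeval g Q) b =
      Polynomial.aeval g (Polynomial.derivative Q) * jacobianDeriv g b := by
  simp only [jacobianDeriv, Derivation.map_aeval, smul_eq_mul]
  ring

lemma isUnit_jacobianDeriv_of_adjoin_eq_top {g h : MvPolynomial (Fin 2) k}
    (hgh : Algebra.adjoin k {g, h} = ⊤) : IsUnit (jacobianDeriv g h) := by
  set I := Ideal.span {jacobianDeriv g h}
  have hu : jacobianDeriv g h ∈ I := Ideal.subset_span rfl
  have hgen : ∀ x ∈ ({g, h} : Set _), ∀ b, jacobianDeriv x b ∈ I := by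
    rintro x (rfl | rfl) b <;> refine (jacobianDerivation x).mem_of_adjoin_eq_top hgh ?_ b
    · rintro y (rfl | rfl) <;> simp [hu, I]
    · rintro y (rfl | rfl)
      · simpa [jacobianDeriv_comm y] using I.neg_mem hu
      · simp [I]
  have hall : ∀ a b, jacobianDeriv a b ∈ I := fun a =>
    (jacobianDerivation a).mem_of_adjoin_eq_top hgh fun x hx => by
      simpa [jacobianDeriv_comm a] using I.neg_mem (hgen x hx a)
  have hone := hall (X 0) (X 1)
  rw [jacobianDeriv_X_zero_X_one, Ideal.mem_span_singleton] at hone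
  exact isUnit_of_dvd_one hone

end Jacobian

lemma IsVariable.exists_algEquiv {k : Type*} [CommRing k] {g : MvPolynomial (Fin 2) k}
    (hg : IsVariable g) :
    ∃ (h : MvPolynomial (Fin 2) k)
      (Θ : MvPolynomial (Fin 2) k ≃ₐ[k] Polynomial (MvPolynomial (Fin 1) k)),
      Algebra.adjoin k {g, h} = ⊤ ∧ Θ g = Polynomial.C (X 0) ∧ Θ h = Polynomial.X := by
  obtain ⟨h, hind, hadj⟩ := hg
  have hind' : AlgebraicIndependent k ![h, g] :=
    (algebraicIndependent_equiv' (Equiv.swap 0 1) (by ext i; fin_cases i <;> rfl)).mpr hind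
  have hsurj : Function.Surjective (MvPolynomial.aeval (R := k) ![h, g]) := by
    rw [← AlgHom.range_eq_top, ← Algebra.adjoin_range_eq_range_aeval,
      Matrix.range_cons_cons_empty, Set.pair_comm, hadj]
  let Φ := AlgEquiv.ofBijective (MvPolynomial.aeval ![h, g]) ⟨hind', hsurj⟩
  refine ⟨h, Φ.symm.trans (finSuccEquiv k 1), hadj, ?_, ?_⟩
  · have hg : Φ (X 1) = g := by simp [Φ]
    rw [AlgEquiv.trans_apply, ← hg, Φ.symm_apply_apply]
    exact finSuccEquiv_X_succ (j := 0)
  · have hh : Φ (X 0) = h := by simp [Φ]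
    rw [AlgEquiv.trans_apply, ← hh, Φ.symm_apply_apply, finSuccEquiv_X_zero]

lemma Polynomial.algHom_aeval_of_eq_C {R B A : Type*} [CommRing R] [CommRing B] [CommRing A]
    [Algebra R B] [Algebra R A] {F : Type*} [FunLike F B (Polynomial A)]
    [AlgHomClass F R B (Polynomial A)] (φ : F) {g : B} {a : A}
    (hφ : φ g = Polynomial.C a) (P : Polynomial R) :
    φ (Polynomial.aeval g P) = Polynomial.C (Polynomial.aeval a P) := by
  rw [← Polynomial.aeval_algHom_apply, hφ, ← Polynomial.algebraMap_eq,
    Polynomial.aeval_algebraMap_apply]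

lemma toDerivation_comapEquiv_scaledHasse {k A : Type*} [CommRing k] [CommRing A] [Algebra k A]
    (Θ : MvPolynomial (Fin 2) k ≃ₐ[k] Polynomial A) {g h : MvPolynomial (Fin 2) k} {c a : A}
    (hgh : Algebra.adjoin k {g, h} = ⊤) (hΘg : Θ g = Polynomial.C c) (hΘh : Θ h = Polynomial.X)
    (Q : Polynomial k) (ha : Θ (jacobianDeriv (Polynomial.aeval g Q) h) = Polynomial.C a) :
    ((HigherDerivation.scaledHasse a).comapEquiv Θ).toDerivation =
      jacobianDerivation (Polynomial.aeval g Q) := by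
  refine Derivation.ext_of_adjoin_eq_top _ hgh ?_
  rintro x (rfl | rfl)
  · simp [hΘg, jacobianDeriv_aeval]
  · simp [hΘh, ← ha]

theorem stmt13_general {k : Type u} [Field k] (p : ℕ)
    (f : MvPolynomial (Fin 2) k)
    (hnp : f ∉ Algebra.adjoin k
      {(X 0 ^ p : MvPolynomial (Fin 2) k), (X 1 ^ p : MvPolynomial (Fin 2) k)})
    (huni : ∃ g : MvPolynomial (Fin 2) k,
      IsVariable g ∧ f ∈ Algebra.adjoin k {g}) :
    ∃ hd : HigherDerivation k (MvPolynomial (Fin 2) k),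
      hd.LocallyFinite ∧ hd.Iterative ∧ IsJacobianType p hd f := by
  obtain ⟨g, hg, hfg⟩ := huni
  obtain ⟨Q, rfl⟩ : ∃ Q : Polynomial k, Polynomial.aeval g Q = f := by
    simpa [Algebra.adjoin_singleton_eq_range_aeval] using hfg
  obtain ⟨h, Θ, hgh, hΘg, hΘh⟩ := hg.exists_algEquiv
  obtain ⟨r, -, hr⟩ :=
    Polynomial.isUnit_iff.mp ((isUnit_jacobianDeriv_of_adjoin_eq_top hgh).map Θ)
  set a := Polynomial.aeval (X 0) (Polynomial.derivative Q) * r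
  have hΘΔh : Θ (jacobianDeriv (Polynomial.aeval g Q) h) = Polynomial.C a := by
    rw [jacobianDeriv_aeval, map_mul, Polynomial.algHom_aeval_of_eq_C Θ hΘg,
      ← hr, ← map_mul]
  set D := (HigherDerivation.scaledHasse a).comapEquiv Θ
  have hf : Polynomial.aeval g Q ∈ D.kerSet := by
    rw [HigherDerivation.mem_kerSet_comapEquiv, Polynomial.algHom_aeval_of_eq_C Θ hΘg]
    exact HigherDerivation.C_mem_kerSet_scaledHasse a _
  have hD1 : ⇑(D.D 1) = jacobianDeriv (Polynomial.aeval g Q) := funext fun b => by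
    simpa only [HigherDerivation.toDerivation_apply, jacobianDerivation_apply] using
      DFunLike.congr_fun (toDerivation_comapEquiv_scaledHasse Θ hgh hΘg hΘh Q hΘΔh) b
  have hit := (HigherDerivation.scaledHasse_iterative (R := k) a).comapEquiv Θ
  refine ⟨D, (HigherDerivation.scaledHasse_locallyFinite a).comapEquiv Θ, hit, ?_, hf, ?_, ?_⟩
  · intro c hc
    exact hnp (hc ▸ Subalgebra.algebraMap_mem _ c)
  · exact congrFun hD1
  · intro ℓ _ b
    rw [hit.factorial_smul_D, hD1]

/-- Corollary 3.2, (i) ⟹ (ii). Let `k` be a field of characteristic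
`p > 0` and `f ∈ k[x,y]` with `f ∉ k[xᵖ, yᵖ]`. If `f` is univariate (i.e. `f ∈ k[g]`
for some variable `g`), then there exists a locally finite iterative higher
`k`-derivation on `k[x,y]` of Jacobian type determined by `f`. -/
theorem stmt13 {k : Type u} [Field k] (p : ℕ) (hp : 0 < p) [CharP k p]
    (f : MvPolynomial (Fin 2) k)
    (hnp : f ∉ Algebra.adjoin k
      {(X 0 ^ p : MvPolynomial (Fin 2) k), (X 1 ^ p : MvPolynomial (Fin 2) k)})
    (huni : ∃ g : MvPolynomial (Fin 2) k,
      IsVariable g ∧ f ∈ Algebra.adjoin k {g}) :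
    ∃ hd : HigherDerivation k (MvPolynomial (Fin 2) k),
      hd.LocallyFinite ∧ hd.Iterative ∧ IsJacobianType p hd f :=
  stmt13_general p f hnp huni
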